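/- Define k₁ := 1 and k_{n+1} := k_n(k_n + 1) for n ≥ 1, and set Γ_n := {(i₁, k_n²i₂, k_n²i₃ + k_n i₁) : i₁, i₂, i₃ ∈ ℤ} ⊆ H₃(ℝ). Then: each Γ_n is a lattice in H₃(ℝ); Γ_{n+1} ⊆ Γ_n for all n; ⋂_{n≥1} Γ_n = {1}; and p(Γ_n) = ℤ × k_n²ℤ, so that ⋂_{n≥1} p(Γ_n) = ℤ × {0} ≠ {0}. (This exhibits a Heisenberg odometer with ⋂Γ_n trivial but ⋂p(Γ_n) nontrivial; in particular this odometer is not normal.) -/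

import Mathlib

open MeasureTheory

/-- The real Heisenberg group `H₃(ℝ)`: `ℝ³` with
`(a,b,c)·(a′,b′,c′) = (a+a′, b+b′, c+c′+a·b′)`. -/
@[ext] structure H3 : Type where
  x : ℝ
  y : ℝ
  z : ℝ

namespace H3

instance : Mul H3 := ⟨fun g h => ⟨g.x + h.x, g.y + h.y, g.z + h.z + g.x * h.y⟩⟩
instance : One H3 := ⟨⟨0, 0, 0⟩⟩
instance : Inv H3 := ⟨fun g => ⟨-g.x, -g.y, -g.z + g.x * g.y⟩⟩

@[simp] lemma mul_x (g h : H3) : (g * h).x = g.x + h.x := rfl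
@[simp] lemma mul_y (g h : H3) : (g * h).y = g.y + h.y := rfl
@[simp] lemma mul_z (g h : H3) : (g * h).z = g.z + h.z + g.x * h.y := rfl
@[simp] lemma one_x : (1 : H3).x = 0 := rfl
@[simp] lemma one_y : (1 : H3).y = 0 := rfl
@[simp] lemma one_z : (1 : H3).z = 0 := rfl
@[simp] lemma inv_x (g : H3) : g⁻¹.x = -g.x := rfl
@[simp] lemma inv_y (g : H3) : g⁻¹.y = -g.y := rfl
@[simp] lemma inv_z (g : H3) : g⁻¹.z = -g.z + g.x * g.y := rfl

instance : Group H3 where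
  mul_assoc a b c := by ext <;> simp <;> ring
  one_mul a := by ext <;> simp
  mul_one a := by ext <;> simp
  inv_mul_cancel a := by ext <;> simp

/-- The Euclidean topology on `H₃(ℝ)`. -/
instance : TopologicalSpace H3 :=
  TopologicalSpace.induced (fun g => (g.x, g.y, g.z)) inferInstance

instance : MeasurableSpace H3 := borel H3

/-- `a(t)`. -/
def Ha (t : ℝ) : H3 := ⟨t, 0, 0⟩
/-- `b(t)`. -/
def Hb (t : ℝ) : H3 := ⟨0, t, 0⟩
/-- `c(t)`, the center. -/
def Hc (t : ℝ) : H3 := ⟨0, 0, t⟩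

/-- The projection `p : H₃(ℝ) → ℝ²`. -/
def pmap (g : H3) : ℝ × ℝ := (g.x, g.y)

/-- The kernel of `p`, i.e. the center of `H₃(ℝ)`, as a subgroup. -/
def pKer : Subgroup H3 where
  carrier := {g | g.x = 0 ∧ g.y = 0}
  one_mem' := ⟨rfl, rfl⟩
  mul_mem' := by
    rintro a b ⟨ha1, ha2⟩ ⟨hb1, hb2⟩
    exact ⟨by simp [ha1, hb1], by simp [ha2, hb2]⟩
  inv_mem' := by
    rintro a ⟨ha1, ha2⟩
    exact ⟨by simp [ha1], by simp [ha2]⟩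

/-- A lattice in `H₃(ℝ)`: a discrete subgroup with compact quotient. -/
def IsLattice (Γ : Subgroup H3) : Prop :=
  DiscreteTopology Γ ∧ CompactSpace (H3 ⧸ Γ)

/-- `k_Γ`: the index of the commutator subgroup `[Γ,Γ]` in `Γ ∩ ker p`. -/
noncomputable def kIdx (Γ : Subgroup H3) : ℕ :=
  Subgroup.relIndex ⁅Γ, Γ⁆ (Γ ⊓ pKer)

/-- The integer lattice `ℤ² ⊆ ℝ²`. -/
def intLattice : Set (ℝ × ℝ) := {v | ∃ m n : ℤ, v = ((m : ℝ), (n : ℝ))}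

/-- The action of a `2×2` matrix on `ℝ²`. -/
def matVec (A : Matrix (Fin 2) (Fin 2) ℝ) (v : ℝ × ℝ) : ℝ × ℝ :=
  (A 0 0 * v.1 + A 0 1 * v.2, A 1 0 * v.1 + A 1 1 * v.2)

/-- The dual of a subset of `ℝ²`:
all vectors pairing integrally with every element of `S`. -/
def dualSet (S : Set (ℝ × ℝ)) : Set (ℝ × ℝ) :=
  {v | ∀ w ∈ S, ∃ n : ℤ, v.1 * w.1 + v.2 * w.2 = (n : ℝ)}

end H3

open H3

/-- `k₁ = 1`, `k_{n+1} = k_n(k_n+1)` (0-indexed). -/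
def kseq : ℕ → ℕ
  | 0 => 1
  | n + 1 => kseq n * (kseq n + 1)

namespace HeisenbergAux

open H3

/-- `H3` is homeomorphic to `ℝ³`. -/
def e : H3 ≃ₜ ℝ × ℝ × ℝ :=
  Equiv.toHomeomorphOfIsInducing
    { toFun := fun g => (g.x, g.y, g.z)
      invFun := fun v => ⟨v.1, v.2.1, v.2.2⟩
      left_inv := fun g => rfl
      right_inv := fun v => rfl } ⟨rfl⟩

lemma continuous_x : Continuous (fun g : H3 => g.x) := continuous_fst.comp e.continuous
lemma continuous_y : Continuous (fun g : H3 => g.y) :=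
  (continuous_fst.comp continuous_snd).comp e.continuous
lemma continuous_z : Continuous (fun g : H3 => g.z) :=
  (continuous_snd.comp continuous_snd).comp e.continuous

/-- The subgroup `Γ` for a parameter `k`. -/
def Gam (k : ℕ) : Subgroup H3 where
  carrier := {g : H3 | ∃ i₁ i₂ i₃ : ℤ,
    g = ⟨(i₁ : ℝ), (k : ℝ) ^ 2 * (i₂ : ℝ), (k : ℝ) ^ 2 * (i₃ : ℝ) + (k : ℝ) * (i₁ : ℝ)⟩}
  one_mem' := ⟨0, 0, 0, by ext <;> simp⟩
  mul_mem' := by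
    rintro a b ⟨i₁, i₂, i₃, rfl⟩ ⟨j₁, j₂, j₃, rfl⟩
    exact ⟨i₁ + j₁, i₂ + j₂, i₃ + j₃ + i₁ * j₂, by ext <;> simp <;> push_cast <;> ring⟩
  inv_mem' := by
    rintro a ⟨i₁, i₂, i₃, rfl⟩
    exact ⟨-i₁, -i₂, -i₃ + i₁ * i₂, by ext <;> simp <;> push_cast <;> ring⟩

lemma mem_Gam {k : ℕ} {g : H3} : g ∈ Gam k ↔ ∃ i₁ i₂ i₃ : ℤ,
    g = ⟨(i₁ : ℝ), (k : ℝ) ^ 2 * (i₂ : ℝ), (k : ℝ) ^ 2 * (i₃ : ℝ) + (k : ℝ) * (i₁ : ℝ)⟩ :=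
  Iff.rfl

lemma one_le_kseq : ∀ n, 1 ≤ kseq n
  | 0 => le_refl 1
  | n + 1 => Nat.one_le_iff_ne_zero.mpr (by
      have := one_le_kseq n
      simp [kseq]; omega)

lemma succ_le_kseq : ∀ n, n + 1 ≤ kseq n
  | 0 => le_refl 1
  | n + 1 => by
      have h1 := succ_le_kseq n
      have h2 := one_le_kseq n
      have : kseq (n + 1) = kseq n * (kseq n + 1) := rfl
      nlinarith

lemma kseq_lt_succ (n : ℕ) : kseq n < kseq (n + 1) := by
  have h2 := one_le_kseq n
  have : kseq (n + 1) = kseq n * (kseq n + 1) := rfl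
  nlinarith

/-- Two integers whose casts are within distance 1 are equal. -/
lemma int_eq_of_close {a b : ℤ} (h : |(a : ℝ) - (b : ℝ)| < 1) : a = b := by
  have : |((a - b : ℤ) : ℝ)| < 1 := by push_cast; exact h
  have h2 : |a - b| < 1 := by exact_mod_cast this
  have h3 := abs_lt.mp h2
  omega

lemma scaled_zero {c : ℝ} (hc : 1 ≤ c) {a : ℤ} (h : |c * (a : ℝ)| < c) : a = 0 := by
  by_contra hne
  have h1 : (1 : ℝ) ≤ |(a : ℝ)| := by
    have h0 : (1 : ℤ) ≤ |a| := by
      rcases a.lt_or_lt_of_ne hne with h | h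
      · rw [abs_of_neg h]; omega
      · rw [abs_of_pos h]; omega
    calc (1 : ℝ) ≤ ((|a| : ℤ) : ℝ) := by exact_mod_cast h0
    _ = |(a : ℝ)| := by push_cast; ring
  rw [abs_mul, abs_of_pos (by linarith : (0:ℝ) < c)] at h
  nlinarith

lemma reduce_mem {c : ℝ} (hc : 0 < c) (t : ℝ) :
    0 ≤ t + c * (-(⌊t / c⌋ : ℤ) : ℝ) ∧ t + c * (-(⌊t / c⌋ : ℤ) : ℝ) ≤ c := by
  have h1 := Int.fract_nonneg (t / c)
  have h2 := (Int.fract_lt_one (t / c)).le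
  have key : t + c * (-(⌊t / c⌋ : ℤ) : ℝ) = c * Int.fract (t / c) := by
    rw [Int.fract]
    push_cast
    field_simp
    ring
  rw [key]
  constructor
  · positivity
  · nlinarith

lemma gam_discrete (k : ℕ) (hk : 1 ≤ k) : DiscreteTopology (Gam k) := by
  rw [discreteTopology_iff_isOpen_singleton]
  rintro ⟨g, hg⟩
  have hc : (1 : ℝ) ≤ (k : ℝ) ^ 2 := by
    have : (1 : ℝ) ≤ (k : ℝ) := by exact_mod_cast hk
    nlinarith
  set U : Set H3 := {h : H3 | |h.x - g.x| < 1 ∧ |h.y - g.y| < (k : ℝ) ^ 2 ∧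
      |h.z - g.z| < (k : ℝ) ^ 2} with hU
  have hUopen : IsOpen U := by
    have h1 : IsOpen {h : H3 | |h.x - g.x| < 1} :=
      isOpen_lt (continuous_x.sub continuous_const).abs continuous_const
    have h2 : IsOpen {h : H3 | |h.y - g.y| < (k : ℝ) ^ 2} :=
      isOpen_lt (continuous_y.sub continuous_const).abs continuous_const
    have h3 : IsOpen {h : H3 | |h.z - g.z| < (k : ℝ) ^ 2} :=
      isOpen_lt (continuous_z.sub continuous_const).abs continuous_const
    exact (h1.inter (h2.inter h3))
  have key : Subtype.val ⁻¹' U = ({⟨g, hg⟩} : Set (Gam k)) := by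
    ext ⟨h, hh⟩
    simp only [Set.mem_preimage, Set.mem_singleton_iff, Subtype.mk_eq_mk]
    constructor
    · rintro ⟨hx, hy, hz⟩
      obtain ⟨i₁, i₂, i₃, rfl⟩ := hh
      obtain ⟨j₁, j₂, j₃, rfl⟩ := hg
      simp only at hx hy hz
      have e1 : i₁ = j₁ := int_eq_of_close hx
      subst e1
      have e2 : i₂ = j₂ := by
        have : |(k:ℝ)^2 * ((i₂ : ℝ) - (j₂ : ℝ))| < (k:ℝ)^2 := by
          rw [mul_sub]; exact hy
        have := scaled_zero hc (a := i₂ - j₂) (by push_cast at this ⊢; linarith [this])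
        omega
      have e3 : i₃ = j₃ := by
        have h' : |(k:ℝ)^2 * ((i₃ : ℝ) - (j₃ : ℝ))| < (k:ℝ)^2 := by
          have : (k:ℝ)^2 * (i₃:ℝ) + (k:ℝ)*(i₁:ℝ) - ((k:ℝ)^2 * (j₃:ℝ) + (k:ℝ)*(i₁:ℝ))
              = (k:ℝ)^2 * ((i₃ : ℝ) - (j₃ : ℝ)) := by ring
          rw [← this]; exact hz
        have := scaled_zero hc (a := i₃ - j₃) (by push_cast at h' ⊢; linarith [h'])
        omega
      subst e2; subst e3; rfl
    · rintro rfl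
      refine ⟨by simpa using zero_lt_one, ?_, ?_⟩ <;> simp <;> nlinarith
  rw [← key]
  exact hUopen.preimage continuous_subtype_val

lemma gam_cocompact (k : ℕ) (hk : 1 ≤ k) : CompactSpace (H3 ⧸ Gam k) := by
  have hkpos : (0 : ℝ) < (k : ℝ) ^ 2 := by positivity
  set K : Set H3 := {h : H3 | h.x ∈ Set.Icc (0:ℝ) 1 ∧ h.y ∈ Set.Icc 0 ((k:ℝ)^2) ∧
      h.z ∈ Set.Icc 0 ((k:ℝ)^2)} with hK
  have hKcompact : IsCompact K := by
    have : K = e ⁻¹' ((Set.Icc (0:ℝ) 1) ×ˢ ((Set.Icc 0 ((k:ℝ)^2)) ×ˢ (Set.Icc 0 ((k:ℝ)^2)))) := by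
      rfl
    rw [this, e.isCompact_preimage]
    exact (isCompact_Icc.prod (isCompact_Icc.prod isCompact_Icc))
  constructor
  have : (Set.univ : Set (H3 ⧸ Gam k)) = (QuotientGroup.mk : H3 → H3 ⧸ Gam k) '' K := by
    refine Set.eq_of_subset_of_subset ?_ (Set.subset_univ _)
    rintro q -
    obtain ⟨g, rfl⟩ := QuotientGroup.mk_surjective q
    set i₁ : ℤ := -⌊g.x⌋ with hi₁
    set i₂ : ℤ := -⌊g.y / (k:ℝ)^2⌋ with hi₂
    set w : ℝ := g.z + (k:ℝ) * (i₁:ℝ) + g.x * ((k:ℝ)^2 * (i₂:ℝ)) with hw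
    set i₃ : ℤ := -⌊w / (k:ℝ)^2⌋ with hi₃
    set γ : H3 := ⟨(i₁ : ℝ), (k : ℝ) ^ 2 * (i₂ : ℝ),
        (k : ℝ) ^ 2 * (i₃ : ℝ) + (k : ℝ) * (i₁ : ℝ)⟩ with hγ
    have hγmem : γ ∈ Gam k := ⟨i₁, i₂, i₃, rfl⟩
    refine ⟨g * γ, ?_, QuotientGroup.mk_mul_of_mem g hγmem⟩
    have hx : (g * γ).x = g.x + (-(⌊g.x⌋ : ℤ) : ℝ) := by simp [hγ, hi₁]
    have hy : (g * γ).y = g.y + (k:ℝ)^2 * (-(⌊g.y / (k:ℝ)^2⌋ : ℤ) : ℝ) := by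
      simp [hγ, hi₂]; try ring
    have hz : (g * γ).z = w + (k:ℝ)^2 * (-(⌊w / (k:ℝ)^2⌋ : ℤ) : ℝ) := by
      simp [hγ, hw, hi₃]; try ring
    have r1 := reduce_mem one_pos g.x
    have r2 := reduce_mem hkpos g.y
    have r3 := reduce_mem hkpos w
    refine ⟨?_, ?_, ?_⟩
    · rw [hx]; constructor
      · simpa using r1.1
      · simpa using r1.2
    · rw [hy]; exact ⟨r2.1, r2.2⟩
    · rw [hz]; exact ⟨r3.1, r3.2⟩
  rw [this]
  exact hKcompact.image continuous_quot_mk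

end HeisenbergAux

/-- Example 3.5: the lattices `Γ_n = {(i₁, k_n²i₂, k_n²i₃ + k_n i₁)}` form a nested
sequence of lattices in `H₃(ℝ)` with trivial intersection, yet
`⋂ p(Γ_n) = ℤ × {0} ≠ {0}`. -/
theorem example_nontrivial_pmap_inter :
    ∃ Γ : ℕ → Subgroup H3,
      (∀ n, (Γ n : Set H3) =
        {g : H3 | ∃ i₁ i₂ i₃ : ℤ,
          g = ⟨(i₁ : ℝ), (kseq n : ℝ) ^ 2 * (i₂ : ℝ),
                (kseq n : ℝ) ^ 2 * (i₃ : ℝ) + (kseq n : ℝ) * (i₁ : ℝ)⟩}) ∧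
      (∀ n, IsLattice (Γ n)) ∧
      (∀ n, Γ (n + 1) ≤ Γ n) ∧
      (⋂ n, (Γ n : Set H3)) = {1} ∧
      (∀ n, pmap '' (Γ n : Set H3) =
        {v : ℝ × ℝ | ∃ m l : ℤ, v = ((m : ℝ), (kseq n : ℝ) ^ 2 * (l : ℝ))}) ∧
      (⋂ n, pmap '' (Γ n : Set H3)) = {v : ℝ × ℝ | ∃ m : ℤ, v = ((m : ℝ), 0)} ∧
      {v : ℝ × ℝ | ∃ m : ℤ, v = ((m : ℝ), 0)} ≠ {(0, 0)} := by
  classical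
  have hone : ∀ n, (1 : ℝ) ≤ (kseq n : ℝ) := fun n => by
    exact_mod_cast HeisenbergAux.one_le_kseq n
  have hsucc : ∀ n : ℕ, ((n : ℝ) + 1) ≤ (kseq n : ℝ) := fun n => by
    exact_mod_cast HeisenbergAux.succ_le_kseq n
  have honesq : ∀ n, (1 : ℝ) ≤ (kseq n : ℝ) ^ 2 := fun n => by nlinarith [hone n]
  refine ⟨fun n => HeisenbergAux.Gam (kseq n), fun n => rfl, ?_, ?_, ?_, ?_, ?_, ?_⟩
  · exact fun n => ⟨HeisenbergAux.gam_discrete _ (HeisenbergAux.one_le_kseq n),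
      HeisenbergAux.gam_cocompact _ (HeisenbergAux.one_le_kseq n)⟩
  · rintro n g ⟨i₁, i₂, i₃, rfl⟩
    refine ⟨i₁, ((kseq n : ℤ) + 1) ^ 2 * i₂, ((kseq n : ℤ) + 1) ^ 2 * i₃ + i₁, ?_⟩
    have hk : (kseq (n + 1) : ℝ) = (kseq n : ℝ) * ((kseq n : ℝ) + 1) := by
      show ((kseq n * (kseq n + 1) : ℕ) : ℝ) = _
      push_cast; ring
    ext <;> simp [hk] <;> push_cast <;> ring
  · ext g
    simp only [Set.mem_iInter, SetLike.mem_coe, Set.mem_singleton_iff]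
    constructor
    · intro h
      have key : ∀ n, ∃ i₁ i₂ i₃ : ℤ, g.x = (i₁ : ℝ) ∧
          g.y = (kseq n : ℝ) ^ 2 * (i₂ : ℝ) ∧
          g.z = (kseq n : ℝ) ^ 2 * (i₃ : ℝ) + (kseq n : ℝ) * g.x := by
        intro n
        obtain ⟨i₁, i₂, i₃, hg⟩ := h n
        exact ⟨i₁, i₂, i₃, by rw [hg], by rw [hg], by rw [hg]⟩
      have hy0 : g.y = 0 := by
        obtain ⟨N, hN⟩ := exists_nat_gt |g.y|
        obtain ⟨i₁, i₂, i₃, hx, hy, hz⟩ := key N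
        have hlt : |(kseq N : ℝ) ^ 2 * (i₂ : ℝ)| < (kseq N : ℝ) ^ 2 := by
          rw [← hy]
          have h1 := hsucc N
          nlinarith [hone N, abs_nonneg g.y]
        have := HeisenbergAux.scaled_zero (honesq N) hlt
        rw [hy, this]; simp
      have claim : ∀ m, |g.z| + |g.x| < (kseq m : ℝ) → g.z = (kseq m : ℝ) * g.x := by
        intro m hm
        obtain ⟨i₁, i₂, i₃, hx, hy, hz⟩ := key m
        have h1 := hone m
        have hlt : |(kseq m : ℝ) ^ 2 * (i₃ : ℝ)| < (kseq m : ℝ) ^ 2 := by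
          have heq : (kseq m : ℝ) ^ 2 * (i₃ : ℝ) = g.z - (kseq m : ℝ) * g.x := by
            rw [hz]; ring
          rw [heq]
          calc |g.z - (kseq m : ℝ) * g.x| ≤ |g.z| + (kseq m : ℝ) * |g.x| := by
                refine (abs_sub _ _).trans ?_
                rw [abs_mul, abs_of_pos (by linarith : (0:ℝ) < (kseq m : ℝ))]
          _ < (kseq m : ℝ) ^ 2 := by nlinarith [abs_nonneg g.x, abs_nonneg g.z]
        have h0 := HeisenbergAux.scaled_zero (honesq m) hlt
        rw [hz, h0]; simp
      obtain ⟨N, hN⟩ := exists_nat_gt (|g.z| + |g.x|)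
      have hz1 : g.z = (kseq N : ℝ) * g.x := by
        refine claim N ?_
        have := hsucc N; linarith
      have hz2 : g.z = (kseq (N + 1) : ℝ) * g.x := by
        refine claim (N + 1) ?_
        have := hsucc (N + 1); push_cast at this; linarith
      have hkne : (kseq N : ℝ) < (kseq (N + 1) : ℝ) := by
        exact_mod_cast HeisenbergAux.kseq_lt_succ N
      have hx0 : g.x = 0 := by
        have : ((kseq (N + 1) : ℝ) - (kseq N : ℝ)) * g.x = 0 := by
          rw [sub_mul, ← hz1, ← hz2]; ring
        rcases mul_eq_zero.mp this with h' | h'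
        · linarith
        · exact h'
      have hz0 : g.z = 0 := by rw [hz1, hx0, mul_zero]
      ext <;> simp [hx0, hy0, hz0]
    · rintro rfl n
      exact ⟨0, 0, 0, by ext <;> simp⟩
  · intro n
    ext v
    constructor
    · rintro ⟨g, ⟨i₁, i₂, i₃, rfl⟩, rfl⟩
      exact ⟨i₁, i₂, rfl⟩
    · rintro ⟨m, l, rfl⟩
      exact ⟨⟨(m : ℝ), (kseq n : ℝ) ^ 2 * (l : ℝ),
        (kseq n : ℝ) ^ 2 * ((0 : ℤ) : ℝ) + (kseq n : ℝ) * (m : ℝ)⟩, ⟨m, l, 0, rfl⟩, rfl⟩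
  · ext v
    simp only [Set.mem_iInter, Set.mem_setOf_eq]
    constructor
    · intro h
      have h2 : ∀ n, ∃ m l : ℤ, v = ((m : ℝ), (kseq n : ℝ) ^ 2 * (l : ℝ)) := by
        intro n
        obtain ⟨g, ⟨i₁, i₂, i₃, rfl⟩, rfl⟩ := h n
        exact ⟨i₁, i₂, rfl⟩
      obtain ⟨m, l0, hv0⟩ := h2 0
      have hv2 : v.2 = 0 := by
        obtain ⟨N, hN⟩ := exists_nat_gt |v.2|
        obtain ⟨mN, lN, hvN⟩ := h2 N
        have hy : v.2 = (kseq N : ℝ) ^ 2 * (lN : ℝ) := by rw [hvN]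
        have hlt : |(kseq N : ℝ) ^ 2 * (lN : ℝ)| < (kseq N : ℝ) ^ 2 := by
          rw [← hy]
          have h1 := hsucc N
          nlinarith [hone N, abs_nonneg v.2]
        have := HeisenbergAux.scaled_zero (honesq N) hlt
        rw [hy, this]; simp
      refine ⟨m, ?_⟩
      have hv1 : v.1 = (m : ℝ) := by rw [hv0]
      exact Prod.ext hv1 hv2
    · rintro ⟨m, rfl⟩ n
      exact ⟨⟨(m : ℝ), (kseq n : ℝ) ^ 2 * ((0 : ℤ) : ℝ),
        (kseq n : ℝ) ^ 2 * ((0 : ℤ) : ℝ) + (kseq n : ℝ) * (m : ℝ)⟩, ⟨m, 0, 0, rfl⟩,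
        by simp [pmap]⟩
  · intro h
    have h1 : ((1 : ℝ), (0 : ℝ)) ∈ {v : ℝ × ℝ | ∃ m : ℤ, v = ((m : ℝ), 0)} :=
      ⟨1, by norm_num⟩
    rw [h] at h1
    simp only [Set.mem_singleton_iff, Prod.mk.injEq] at h1
    exact one_ne_zero h1.1
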